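/- arXiv:2604.12589 — 2 statements merged into one kernel-verified Lean document; each statement's English description precedes it below -/
import Mathlib

section
/- Let G be a connected compact metric graph with exponents p̄ = (p_e), 1 < p_e < ∞. There exists a constant C > 0 such that every u ∈ W^{1,p̄}(G) satisfies Σ_{e∈E} ( ∫₀^{ℓ_e} |u_e|^{p_e} )^{1/p_e} ≤ C · ( Σ_{e∈E} ( ∫₀^{ℓ_e} |u_e'|^{p_e} )^{1/p_e} + | Σ_{e∈E} ∫₀^{ℓ_e} u_e | ) (equivalent formulation of the Poincaré inequality on a compact metric graph). -/
open MeasureTheory Set Filter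

noncomputable section

/-- A connected compact metric graph: finite nonempty vertex set, finite edge set,
initial/terminal vertex maps without loops, positive edge lengths, no multiple edges,
and connectedness via paths of edges. -/
structure MetricGraph where
  V : Type
  E : Type
  fintypeV : Fintype V
  fintypeE : Fintype E
  nonemptyV : Nonempty V
  ι : E → V
  τ : E → V
  no_loops : ∀ e, ι e ≠ τ e
  len : E → ℝ
  len_pos : ∀ e, 0 < len e
  no_multi : ∀ e e', ({ι e, τ e} : Set V) = ({ι e', τ e'} : Set V) → e = e'
  connected : ∀ v w : V,
    Relation.ReflTransGen (fun a b => ∃ e, (ι e = a ∧ τ e = b) ∨ (ι e = b ∧ τ e = a)) v w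

/-- Sum over the edges of the graph. -/
def edgeSum (G : MetricGraph) (F : G.E → ℝ) : ℝ :=
  letI := G.fintypeE
  ∑ e, F e

/-- Sum over the vertices of the graph. -/
def vertexSum (G : MetricGraph) (F : G.V → ℝ) : ℝ :=
  letI := G.fintypeV
  ∑ v, F v

/-- Number of vertices. -/
def vertexCard (G : MetricGraph) : ℕ :=
  letI := G.fintypeV
  Fintype.card G.V

/-- ρ_p(r) = |r|^(p-2) r. -/
def rho (p r : ℝ) : ℝ := |r| ^ (p - 2) * r

/-- `(u, u')` is in the Sobolev space W^{1,p}(0,ℓ): `u'` is integrable with `|u'|^p`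
integrable on (0,ℓ), and `u` is absolutely continuous on [0,ℓ] with derivative `u'`. -/
def IntervalSobolev (ℓ p : ℝ) (u u' : ℝ → ℝ) : Prop :=
  IntegrableOn u' (Ioo 0 ℓ) volume ∧
  IntegrableOn (fun x => |u' x| ^ p) (Ioo 0 ℓ) volume ∧
  ∀ x ∈ Icc (0:ℝ) ℓ, u x = u 0 + ∫ t in (0:ℝ)..x, u' t

/-- `(u, u')` is in W^{1,p̄}(G), continuous at the vertices with vertex values `uV`. -/
def GraphSobolev (G : MetricGraph) (p : G.E → ℝ) (u u' : G.E → ℝ → ℝ) (uV : G.V → ℝ) : Prop :=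
  (∀ e, IntervalSobolev (G.len e) (p e) (u e) (u' e)) ∧
  (∀ e, u e 0 = uV (G.ι e)) ∧
  (∀ e, u e (G.len e) = uV (G.τ e))

/-- `v` is a weak solution of the graph problem (P_ω^f) with data `u, u', uV`. -/
def SolvesGraphProblem (G : MetricGraph) (p : G.E → ℝ) (γ : G.E → ℝ → ℝ)
    (f : G.E → ℝ → ℝ) (ω : G.V → ℝ)
    (v : G.E → ℝ → ℝ) (u u' : G.E → ℝ → ℝ) (uV : G.V → ℝ) : Prop :=
  (∀ e, IntegrableOn (v e) (Ioo 0 (G.len e)) volume) ∧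
  GraphSobolev G p u u' uV ∧
  (∀ e, ∀ᵐ x ∂(volume.restrict (Ioo 0 (G.len e))), v e x = γ e (u e x)) ∧
  ∀ φ φ' : G.E → ℝ → ℝ, ∀ φV : G.V → ℝ, GraphSobolev G p φ φ' φV →
    edgeSum G (fun e => ∫ x in Ioo 0 (G.len e), v e x * φ e x)
      + edgeSum G (fun e => ∫ x in Ioo 0 (G.len e), rho (p e) (u' e x) * φ' e x)
    = edgeSum G (fun e => ∫ x in Ioo 0 (G.len e), f e x * φ e x)
      + vertexSum G (fun w => ω w * φV w)

/-- `v` is a weak solution of the graph problem (P_ω^f). -/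
def IsGraphWeakSolution (G : MetricGraph) (p : G.E → ℝ) (γ : G.E → ℝ → ℝ)
    (f : G.E → ℝ → ℝ) (ω : G.V → ℝ) (v : G.E → ℝ → ℝ) : Prop :=
  ∃ u u' uV, SolvesGraphProblem G p γ f ω v u u' uV

/-- `v` is a weak solution of the interval Neumann problem (P^{γ,f}_{p,a,b}),
with associated Sobolev function `u` (derivative `u'`). -/
def SolvesNeumann (ℓ p : ℝ) (γ f : ℝ → ℝ) (a b : ℝ) (v u u' : ℝ → ℝ) : Prop :=
  IntegrableOn v (Ioo 0 ℓ) volume ∧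
  IntervalSobolev ℓ p u u' ∧
  (∀ᵐ x ∂(volume.restrict (Ioo 0 ℓ)), v x = γ (u x)) ∧
  ∀ φ φ' : ℝ → ℝ, IntervalSobolev ℓ p φ φ' →
    (∫ x in Ioo 0 ℓ, v x * φ x) + (∫ x in Ioo 0 ℓ, rho p (u' x) * φ' x)
    = (∫ x in Ioo 0 ℓ, f x * φ x) + a * φ 0 + b * φ ℓ

/-- `v` is a weak solution of the interval Neumann problem (P^{γ,f}_{p,a,b}). -/
def IsNeumannWeakSolution (ℓ p : ℝ) (γ f : ℝ → ℝ) (a b : ℝ) (v : ℝ → ℝ) : Prop :=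
  ∃ u u', SolvesNeumann ℓ p γ f a b v u u'

end

/-!
Along a path of edges, vertex values of `u` differ by at most the number of steps times
`T = ∑ₑ ∫ |uₑ'|`, so by connectedness every value of `u` lies within `M T` of any vertex value `c`.
Integrating over the graph, `|∑ₑ ∫ uₑ - L c| ≤ L M T` with `L` the total length, which bounds `|c|`
and hence `sup |u|` by `|∑ₑ ∫ uₑ| / L + 2 M T`. Each `‖uₑ‖_{pₑ}` is at most `ℓₑ^{1/pₑ} sup |u|`,
and Hölder gives `∫ |uₑ'| ≤ ℓₑ^{1-1/pₑ} ‖uₑ'‖_{pₑ}`.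
-/

section Interval

variable {ℓ p : ℝ} {u u' f : ℝ → ℝ}

theorem IntervalSobolev.continuousOn (h : IntervalSobolev ℓ p u u') :
    ContinuousOn u (Icc 0 ℓ) := by
  obtain ⟨hu', -, hu⟩ := h
  have hprim : ContinuousOn (fun x => u 0 + ∫ t in (0:ℝ)..x, u' t) (Icc 0 ℓ) := by
    refine continuousOn_const.add <| (intervalIntegral.continuousOn_primitive
      ((integrableOn_Icc_iff_integrableOn_Ioo).2 hu')).congr fun x hx => ?_
    rw [intervalIntegral.integral_of_le hx.1]
  exact hprim.congr hu

theorem IntervalSobolev.integrableOn (h : IntervalSobolev ℓ p u u') :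
    IntegrableOn u (Ioo 0 ℓ) :=
  (h.continuousOn.integrableOn_compact isCompact_Icc).mono_set Ioo_subset_Icc_self

theorem IntervalSobolev.abs_sub_le (h : IntervalSobolev ℓ p u u') {x : ℝ} (hx : x ∈ Icc 0 ℓ) :
    |u x - u 0| ≤ ∫ t in Ioo 0 ℓ, |u' t| := by
  obtain ⟨hu', -, hu⟩ := h
  rw [hu x hx, add_sub_cancel_left, ← integral_Ioc_eq_integral_Ioo]
  calc |∫ t in (0:ℝ)..x, u' t| ≤ ∫ t in Ioc 0 x, |u' t| := by
        rw [← intervalIntegral.integral_of_le hx.1]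
        exact intervalIntegral.abs_integral_le_integral_abs hx.1
    _ ≤ ∫ t in Ioc 0 ℓ, |u' t| :=
        setIntegral_mono_set ((integrableOn_Ioc_iff_integrableOn_Ioo).2 hu'.abs)
          (Eventually.of_forall fun t => abs_nonneg _)
          (Ioc_subset_Ioc_right hx.2).eventuallyLE

theorem integral_Ioo_abs_le_rpow_mul (hℓ : 0 ≤ ℓ) (hp : 1 < p) (hf : IntegrableOn f (Ioo 0 ℓ))
    (hfp : IntegrableOn (fun x => |f x| ^ p) (Ioo 0 ℓ)) :
    ∫ x in Ioo 0 ℓ, |f x| ≤ ℓ ^ (1 - 1 / p) * (∫ x in Ioo 0 ℓ, |f x| ^ p) ^ (1 / p) := by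
  have hpq := Real.HolderConjugate.conjExponent hp
  have hf_memLp : MemLp f (ENNReal.ofReal p) (volume.restrict (Ioo 0 ℓ)) := by
    refine (integrable_norm_rpow_iff hf.aestronglyMeasurable (by simp; linarith) (by simp)).1 ?_
    simpa [ENNReal.toReal_ofReal (by linarith : 0 ≤ p)] using hfp.integrable
  have := integral_mul_norm_le_Lp_mul_Lq hpq hf_memLp
    (memLp_const (μ := volume.restrict (Ioo 0 ℓ)) (1 : ℝ))
  have hq : 1 / p.conjExponent = 1 - 1 / p := by
    rw [eq_sub_iff_add_eq, add_comm]; simpa [one_div] using hpq.inv_add_inv_eq_one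
  simp only [norm_one, mul_one, Real.one_rpow, Real.norm_eq_abs, integral_const, smul_eq_mul,
    measureReal_restrict_apply_univ, Real.volume_real_Ioo_of_le hℓ, sub_zero, hq] at this
  linarith

theorem integral_Ioo_abs_rpow_rpow_le {S : ℝ} (hℓ : 0 ≤ ℓ) (hp : 0 < p) (hS0 : 0 ≤ S)
    (hS : ∀ x ∈ Ioo 0 ℓ, |f x| ≤ S) :
    (∫ x in Ioo 0 ℓ, |f x| ^ p) ^ (1 / p) ≤ ℓ ^ (1 / p) * S := by
  have hint : ∫ x in Ioo 0 ℓ, |f x| ^ p ≤ ℓ * S ^ p := by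
    calc ∫ x in Ioo 0 ℓ, |f x| ^ p ≤ ∫ _ in Ioo 0 ℓ, S ^ p :=
          integral_mono_of_nonneg (Eventually.of_forall fun x => by positivity)
            (integrableOn_const measure_Ioo_lt_top.ne)
            (ae_restrict_of_forall_mem measurableSet_Ioo fun x hx =>
              Real.rpow_le_rpow (abs_nonneg _) (hS x hx) hp.le)
      _ = ℓ * S ^ p := by
          rw [integral_const, smul_eq_mul, measureReal_restrict_apply_univ,
            Real.volume_real_Ioo_of_le hℓ, sub_zero]
  calc (∫ x in Ioo 0 ℓ, |f x| ^ p) ^ (1 / p) ≤ (ℓ * S ^ p) ^ (1 / p) :=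
        Real.rpow_le_rpow (integral_nonneg fun x => by positivity) hint (by positivity)
    _ = ℓ ^ (1 / p) * S := by
        rw [Real.mul_rpow hℓ (by positivity), ← Real.rpow_mul hS0, mul_one_div_cancel hp.ne',
          Real.rpow_one]

theorem abs_integral_Ioo_sub_mul_le {c B : ℝ} (hℓ : 0 ≤ ℓ) (hf : IntegrableOn f (Ioo 0 ℓ))
    (hB : ∀ x ∈ Ioo 0 ℓ, |f x - c| ≤ B) :
    |(∫ x in Ioo 0 ℓ, f x) - ℓ * c| ≤ ℓ * B := by
  have := norm_setIntegral_le_of_norm_le_const (f := fun x => f x - c) (μ := volume)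
    measure_Ioo_lt_top hB
  rwa [integral_sub hf (integrableOn_const measure_Ioo_lt_top.ne), integral_const, smul_eq_mul,
    measureReal_restrict_apply_univ, Real.volume_real_Ioo_of_le hℓ, sub_zero, Real.norm_eq_abs,
    mul_comm B] at this

end Interval

namespace MetricGraph

variable (G : MetricGraph)

theorem edgeSum_le_edgeSum {F H : G.E → ℝ} (h : ∀ e, F e ≤ H e) :
    edgeSum G F ≤ edgeSum G H :=
  letI := G.fintypeE
  Finset.sum_le_sum fun e _ => h e

theorem edgeSum_nonneg {F : G.E → ℝ} (h : ∀ e, 0 ≤ F e) : 0 ≤ edgeSum G F :=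
  letI := G.fintypeE
  Finset.sum_nonneg fun e _ => h e

theorem single_le_edgeSum {F : G.E → ℝ} (h : ∀ e, 0 ≤ F e) (e : G.E) : F e ≤ edgeSum G F :=
  letI := G.fintypeE
  Finset.single_le_sum (fun e _ => h e) (Finset.mem_univ e)

theorem edgeSum_mul (F : G.E → ℝ) (c : ℝ) : edgeSum G F * c = edgeSum G fun e => F e * c :=
  letI := G.fintypeE
  Finset.sum_mul _ _ _

theorem edgeSum_sub_distrib (F H : G.E → ℝ) :
    edgeSum G (fun e => F e - H e) = edgeSum G F - edgeSum G H :=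
  letI := G.fintypeE
  Finset.sum_sub_distrib _ _

theorem abs_edgeSum_le (F : G.E → ℝ) : |edgeSum G F| ≤ edgeSum G fun e => |F e| :=
  letI := G.fintypeE
  Finset.abs_sum_le_sum_abs _ _

noncomputable def edgeL1Norm (f : G.E → ℝ → ℝ) : ℝ :=
  edgeSum G fun e => ∫ x in Ioo 0 (G.len e), |f e x|

theorem integral_abs_le_edgeL1Norm (f : G.E → ℝ → ℝ) (e : G.E) :
    ∫ x in Ioo 0 (G.len e), |f e x| ≤ G.edgeL1Norm f :=
  G.single_le_edgeSum (F := fun e => ∫ x in Ioo 0 (G.len e), |f e x|)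
    (fun _ => integral_nonneg fun _ => abs_nonneg _) e

theorem edgeL1Norm_nonneg (f : G.E → ℝ → ℝ) : 0 ≤ G.edgeL1Norm f :=
  G.edgeSum_nonneg fun _ => integral_nonneg fun _ => abs_nonneg _

noncomputable def edgeLpNorm (p : G.E → ℝ) (f : G.E → ℝ → ℝ) (e : G.E) : ℝ :=
  (∫ x in Ioo 0 (G.len e), |f e x| ^ p e) ^ (1 / p e)

theorem edgeLpNorm_nonneg (p : G.E → ℝ) (f : G.E → ℝ → ℝ) (e : G.E) : 0 ≤ G.edgeLpNorm p f e :=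
  Real.rpow_nonneg (integral_nonneg fun _ => by positivity) _

variable {G} {p : G.E → ℝ} {u u' : G.E → ℝ → ℝ} {uV : G.V → ℝ}

theorem _root_.GraphSobolev.abs_sub_vertex_le (h : GraphSobolev G p u u' uV) (e : G.E) {x : ℝ}
    (hx : x ∈ Icc 0 (G.len e)) : |u e x - uV (G.ι e)| ≤ G.edgeL1Norm u' := by
  rw [← h.2.1 e]
  exact ((h.1 e).abs_sub_le hx).trans (G.integral_abs_le_edgeL1Norm u' e)

theorem _root_.GraphSobolev.abs_vertex_sub_vertex_le (h : GraphSobolev G p u u' uV) (e : G.E) :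
    |uV (G.ι e) - uV (G.τ e)| ≤ G.edgeL1Norm u' := by
  rw [abs_sub_comm, ← h.2.2 e]
  exact h.abs_sub_vertex_le e ⟨(G.len_pos e).le, le_rfl⟩

variable (p)

theorem exists_abs_vertex_sub_le_of_reflTransGen {v w : G.V}
    (hvw : Relation.ReflTransGen
      (fun a b => ∃ e, (G.ι e = a ∧ G.τ e = b) ∨ (G.ι e = b ∧ G.τ e = a)) v w) :
    ∃ n : ℕ, ∀ u u' uV, GraphSobolev G p u u' uV → |uV v - uV w| ≤ n * G.edgeL1Norm u' := by
  induction hvw with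
  | refl => exact ⟨0, fun u u' uV _ => by simp⟩
  | tail _ hbc ih =>
    obtain ⟨n, hn⟩ := ih
    obtain ⟨e, he⟩ := hbc
    refine ⟨n + 1, fun u u' uV hu => ?_⟩
    have hstep := hu.abs_vertex_sub_vertex_le e
    rcases he with ⟨rfl, rfl⟩ | ⟨rfl, rfl⟩
    · have := abs_sub_le (uV v) (uV (G.ι e)) (uV (G.τ e))
      push_cast; linarith [hn u u' uV hu]
    · have := abs_sub_le (uV v) (uV (G.τ e)) (uV (G.ι e))
      rw [abs_sub_comm] at hstep
      push_cast; linarith [hn u u' uV hu]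

theorem exists_abs_sub_vertex_le :
    ∃ M : ℝ, 0 ≤ M ∧ ∀ u u' uV, GraphSobolev G p u u' uV →
      ∀ e, ∀ x ∈ Icc 0 (G.len e), ∀ v, |u e x - uV v| ≤ M * G.edgeL1Norm u' := by
  let := G.fintypeV
  choose n hn using fun vw : G.V × G.V =>
    exists_abs_vertex_sub_le_of_reflTransGen p (G.connected vw.1 vw.2)
  refine ⟨Finset.univ.sup n + 1, by positivity, fun u u' uV hu e x hx v => ?_⟩
  have hT := G.edgeL1Norm_nonneg u'
  have hnN : (n (G.ι e, v) : ℝ) ≤ Finset.univ.sup n :=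
    Nat.cast_le.2 (Finset.le_sup (Finset.mem_univ _))
  have := abs_sub_le (u e x) (uV (G.ι e)) (uV v)
  nlinarith [hu.abs_sub_vertex_le e hx, hn (G.ι e, v) u u' uV hu]

theorem exists_abs_le_mean_add :
    ∃ M : ℝ, 0 ≤ M ∧ ∀ u u' uV, GraphSobolev G p u u' uV → ∀ e, ∀ x ∈ Icc 0 (G.len e),
      |u e x| ≤ |edgeSum G fun e => ∫ x in Ioo 0 (G.len e), u e x| / edgeSum G G.len
        + M * G.edgeL1Norm u' := by
  obtain ⟨M, hM0, hM⟩ := exists_abs_sub_vertex_le p (G := G)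
  refine ⟨2 * M, by positivity, fun u u' uV hu e x hx => ?_⟩
  set c := uV (G.ι e)
  set T := G.edgeL1Norm u'
  set L := edgeSum G G.len
  set I := edgeSum G fun e => ∫ x in Ioo 0 (G.len e), u e x
  have hL : 0 < L := (G.len_pos e).trans_le (G.single_le_edgeSum (fun e => (G.len_pos e).le) e)
  have hmean : |I - L * c| ≤ L * (M * T) := by
    calc |I - L * c|
        = |edgeSum G fun e' => (∫ x in Ioo 0 (G.len e'), u e' x) - G.len e' * c| := by
          rw [G.edgeSum_sub_distrib, ← G.edgeSum_mul]
      _ ≤ edgeSum G fun e' => |(∫ x in Ioo 0 (G.len e'), u e' x) - G.len e' * c| :=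
          G.abs_edgeSum_le _
      _ ≤ edgeSum G fun e' => G.len e' * (M * T) :=
          G.edgeSum_le_edgeSum fun e' => abs_integral_Ioo_sub_mul_le (G.len_pos e').le
            (hu.1 e').integrableOn fun y hy => hM u u' uV hu e' y (Ioo_subset_Icc_self hy) (G.ι e)
      _ = L * (M * T) := (G.edgeSum_mul _ _).symm
  have hc : |c| ≤ |I| / L + M * T := by
    rw [div_add' _ _ _ hL.ne', le_div_iff₀ hL]
    have := abs_sub_abs_le_abs_sub (L * c) I
    rw [abs_mul, abs_of_pos hL, abs_sub_comm] at this
    linarith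
  have := abs_sub_abs_le_abs_sub (u e x) c
  linarith [hM u u' uV hu e x hx (G.ι e)]

variable {p}

theorem _root_.GraphSobolev.edgeL1Norm_deriv_le (hp : ∀ e, 1 < p e)
    (h : GraphSobolev G p u u' uV) :
    G.edgeL1Norm u' ≤
      (edgeSum G fun e => G.len e ^ (1 - 1 / p e)) * edgeSum G (G.edgeLpNorm p u') := by
  calc G.edgeL1Norm u'
      ≤ edgeSum G fun e => G.len e ^ (1 - 1 / p e) * edgeSum G (G.edgeLpNorm p u') :=
        G.edgeSum_le_edgeSum fun e =>
          (integral_Ioo_abs_le_rpow_mul (G.len_pos e).le (hp e) (h.1 e).1 (h.1 e).2.1).trans <|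
            mul_le_mul_of_nonneg_left (G.single_le_edgeSum (G.edgeLpNorm_nonneg p u') e)
              (Real.rpow_nonneg (G.len_pos e).le _)
    _ = _ := (G.edgeSum_mul _ _).symm

end MetricGraph

/-- equivalent formulation of the Poincaré inequality on a compact metric graph. -/
theorem poincare_inequality_metric_graph_mean_form
    (G : MetricGraph) (p : G.E → ℝ) (hp : ∀ e, 1 < p e) :
    ∃ C : ℝ, 0 < C ∧
      ∀ (u u' : G.E → ℝ → ℝ) (uV : G.V → ℝ), GraphSobolev G p u u' uV →
        edgeSum G (fun e => (∫ x in Ioo (0:ℝ) (G.len e), |u e x| ^ p e) ^ (1 / p e))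
          ≤ C * (edgeSum G (fun e => (∫ x in Ioo (0:ℝ) (G.len e), |u' e x| ^ p e) ^ (1 / p e))
                 + |edgeSum G (fun e => ∫ x in Ioo (0:ℝ) (G.len e), u e x)|) := by
  obtain ⟨M, hM0, hM⟩ := G.exists_abs_le_mean_add p
  set L := edgeSum G G.len
  set K := edgeSum G fun e => G.len e ^ (1 - 1 / p e)
  set P := edgeSum G fun e => G.len e ^ (1 / p e)
  have hL : 0 ≤ L := G.edgeSum_nonneg fun e => (G.len_pos e).le
  have hK : 0 ≤ K := G.edgeSum_nonneg fun e => Real.rpow_nonneg (G.len_pos e).le _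
  have hP : 0 ≤ P := G.edgeSum_nonneg fun e => Real.rpow_nonneg (G.len_pos e).le _
  have hPL : 0 ≤ P / L := div_nonneg hP hL
  have hMPK : 0 ≤ M * P * K := by positivity
  refine ⟨P / L + M * P * K + 1, by linarith, fun u u' uV hu => ?_⟩
  set A := |edgeSum G fun e => ∫ x in Ioo (0:ℝ) (G.len e), u e x|
  set D := edgeSum G (G.edgeLpNorm p u')
  set T := G.edgeL1Norm u'
  have hA : 0 ≤ A := abs_nonneg _
  have hD : 0 ≤ D := G.edgeSum_nonneg (G.edgeLpNorm_nonneg p u')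
  have hS : 0 ≤ A / L + M * T := by have := G.edgeL1Norm_nonneg u'; positivity
  have hLp : edgeSum G (G.edgeLpNorm p u) ≤ P * (A / L + M * T) := by
    rw [G.edgeSum_mul]
    exact G.edgeSum_le_edgeSum fun e => integral_Ioo_abs_rpow_rpow_le (G.len_pos e).le
      (by linarith [hp e]) hS fun x hx => hM u u' uV hu e x (Ioo_subset_Icc_self hx)
  have hT : T ≤ K * D := hu.edgeL1Norm_deriv_le hp
  calc _ ≤ P * (A / L + M * T) := hLp
    _ = P / L * A + M * P * T := by ring
    _ ≤ P / L * A + M * P * (K * D) := by gcongr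
    _ ≤ (P / L + M * P * K + 1) * (D + A) := by
        nlinarith [mul_nonneg hPL hD, mul_nonneg hMPK hA]
end

section
/- Let G be a connected compact metric graph with exponents p̄ and nonlinearities γ_e as above. For i = 1, 2, let f^i = (f^i_e) with f^i_e ∈ L^1(0,ℓ_e), ω^i : V → ℝ, and let v^i be a weak solution of (P_{ω^i}^{f^i}). Then Σ_{e∈E} ∫₀^{ℓ_e} (v¹_e − v²_e)⁺ ≤ Σ_{e∈E} ∫₀^{ℓ_e} (f¹_e − f²_e)⁺ + Σ_{v∈V} (ω¹(v) − ω²(v))⁺. In particular, weak solutions of (P_ω^f) are unique up to a.e. equality on each edge. -/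
open MeasureTheory Set Filter

/-!
Test the difference of the two weak formulations with `φ = ramp δ (2δ) (u₁ - u₂)`, the Lipschitz
truncation of `u₁ - u₂` rising from `0` to `1` between the levels `δ` and `2δ`. By the chain rule
for absolutely continuous functions (whose derivative vanishes a.e. on every level set), `φ` is
an admissible test function with `φ' = 1_{δ < u₁ - u₂ < 2δ} (u₁' - u₂') / δ`. Monotonicity of
`ρ_p` then makes the gradient term nonnegative, while `0 ≤ φ ≤ 1` bounds the source and flux
terms by their positive parts. As `δ → 0`, `φ → 1_{u₁ > u₂}`, and monotonicity of `γ` turns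
`(v₁ - v₂) 1_{u₁ > u₂}` into `(v₁ - v₂)⁺`. Uniqueness follows by exchanging the two solutions.
-/

open Topology intervalIntegral Asymptotics
open scoped NNReal

theorem LipschitzWith.comp_absolutelyContinuousOnInterval {X Y : Type*} [PseudoMetricSpace X]
    [PseudoMetricSpace Y] {K : ℝ≥0} {F : X → Y} (hF : LipschitzWith K F) {W : ℝ → X} {a b : ℝ}
    (hW : AbsolutelyContinuousOnInterval W a b) :
    AbsolutelyContinuousOnInterval (F ∘ W) a b := by
  unfold AbsolutelyContinuousOnInterval at hW ⊢
  have hK := hW.const_mul (K : ℝ)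
  rw [mul_zero] at hK
  refine squeeze_zero (fun _ => Finset.sum_nonneg fun _ _ => dist_nonneg) (fun E => ?_) hK
  rw [Finset.mul_sum]
  exact Finset.sum_le_sum fun i _ => hF.dist_le_mul _ _

theorem LipschitzWith.hasDerivAt_comp_of_hasDerivAt_zero {K : ℝ≥0} {F W : ℝ → ℝ}
    (hF : LipschitzWith K F) {t : ℝ} (hW : HasDerivAt W 0 t) :
    HasDerivAt (F ∘ W) 0 t := by
  rw [hasDerivAt_iff_isLittleO] at hW ⊢
  simp only [smul_zero, sub_zero] at hW ⊢
  refine IsBigO.trans_isLittleO (IsBigO.of_bound K (Eventually.of_forall fun s => ?_)) hW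
  simpa only [Function.comp_apply, Real.norm_eq_abs, ← Real.dist_eq]
    using hF.dist_le_mul (W s) (W t)

theorem AbsolutelyContinuousOnInterval.integral_eq_sub_of_ae_hasDerivAt {f g : ℝ → ℝ} {a b : ℝ}
    (hf : AbsolutelyContinuousOnInterval f a b)
    (hg : ∀ᵐ t, t ∈ uIcc a b → HasDerivAt f (g t) t) :
    ∫ t in a..b, g t = f b - f a := by
  rw [← hf.integral_deriv_eq_sub]
  refine integral_congr_ae ?_
  filter_upwards [hg] with t ht hmem
  exact (ht (uIoc_subset_uIcc hmem)).deriv.symm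

theorem ae_eq_zero_of_hasDerivAt_of_eq {W h : ℝ → ℝ} (c : ℝ) :
    ∀ᵐ t, HasDerivAt W (h t) t → W t = c → h t = 0 := by
  set S := {t | HasDerivAt W (h t) t ∧ W t = c ∧ h t ≠ 0}
  -- a point of `S` is isolated in `S`, since `W` takes the value `c` only once near it
  have hS : S ⊆ {t | t ∈ S ∧ 𝓝[S ∩ Ioi t] t = ⊥} := by
    intro t ht
    refine ⟨ht, eventually_false_iff_eq_bot.1 ?_⟩
    have hne : ∀ᶠ s in 𝓝[S ∩ Ioi t] t, W s ≠ c :=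
      nhdsWithin_mono _ (fun s hs => ne_of_gt hs.2) (ht.1.eventually_ne ht.2.2)
    filter_upwards [hne, self_mem_nhdsWithin] with s hs hsS using hs hsS.1.2.1
  have hS0 : volume S = 0 := (countable_setOfPred_isolated_right_within.mono hS).measure_zero _
  refine measure_mono_null (fun t ht => ?_) hS0
  simp only [mem_compl_iff, mem_ofPred_eq, Classical.not_imp] at ht
  exact ht

noncomputable def ramp (c d y : ℝ) : ℝ := (min (max y c) d - c) / (d - c)

noncomputable def rampDeriv (c d y : ℝ) : ℝ := (Ioo c d).indicator (fun _ => (d - c)⁻¹) y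

section Ramp

variable {c d : ℝ}

theorem ramp_nonneg (hcd : c ≤ d) (y : ℝ) : 0 ≤ ramp c d y :=
  div_nonneg (sub_nonneg.2 (le_min (le_max_right y c) hcd)) (sub_nonneg.2 hcd)

theorem ramp_le_one (hcd : c ≤ d) (y : ℝ) : ramp c d y ≤ 1 :=
  div_le_one_of_le₀ (by linarith [min_le_right (max y c) d]) (sub_nonneg.2 hcd)

theorem ramp_of_le (hcd : c ≤ d) {y : ℝ} (hy : y ≤ c) : ramp c d y = 0 := by
  rw [ramp, max_eq_right hy, min_eq_left hcd, sub_self, zero_div]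

theorem ramp_of_ge (hcd : c < d) {y : ℝ} (hy : d ≤ y) : ramp c d y = 1 := by
  rw [ramp, max_eq_left (hcd.le.trans hy), min_eq_right hy, div_self (sub_ne_zero.2 hcd.ne')]

theorem ramp_of_mem_Icc {y : ℝ} (hy : y ∈ Icc c d) : ramp c d y = (y - c) / (d - c) := by
  rw [ramp, max_eq_left hy.1, min_eq_left hy.2]

theorem lipschitzWith_ramp (hcd : c < d) : LipschitzWith (d - c).toNNReal⁻¹ (ramp c d) := by
  refine LipschitzWith.of_dist_le_mul fun y z => ?_
  have hclamp : |min (max y c) d - min (max z c) d| ≤ |y - z| :=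
    (abs_min_sub_min_le_max _ _ _ _).trans
      (by simpa using abs_max_sub_max_le_abs y z c)
  rw [NNReal.coe_inv, Real.coe_toNNReal _ (sub_pos.2 hcd).le, Real.dist_eq, Real.dist_eq, ramp,
    ramp, ← sub_div, abs_div, abs_of_pos (sub_pos.2 hcd), inv_mul_eq_div, sub_sub_sub_cancel_right]
  exact div_le_div_of_nonneg_right hclamp (sub_pos.2 hcd).le

theorem HasDerivAt.ramp_comp (hcd : c < d) {W : ℝ → ℝ} {w t : ℝ} (hW : HasDerivAt W w t)
    (hc : W t = c → w = 0) (hd : W t = d → w = 0) :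
    HasDerivAt (fun s => ramp c d (W s)) (rampDeriv c d (W t) * w) t := by
  by_cases hcd' : W t = c ∨ W t = d
  · obtain rfl : w = 0 := hcd'.elim hc hd
    rw [mul_zero]
    exact (lipschitzWith_ramp hcd).hasDerivAt_comp_of_hasDerivAt_zero hW
  rw [not_or] at hcd'
  have hWc := hW.continuousAt
  rcases lt_or_gt_of_ne hcd'.1 with hlt | hgt
  · have hev : ∀ᶠ s in 𝓝 t, ramp c d (W s) = 0 := by
      filter_upwards [hWc.eventually_lt continuousAt_const hlt] with s hs
      exact ramp_of_le hcd.le hs.le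
    rw [rampDeriv, indicator_of_notMem (fun h => hlt.not_gt h.1), zero_mul]
    exact (hasDerivAt_const t 0).congr_of_eventuallyEq hev
  rcases lt_or_gt_of_ne hcd'.2 with hlt' | hgt'
  · have hev : ∀ᶠ s in 𝓝 t, ramp c d (W s) = (W s - c) / (d - c) := by
      filter_upwards [hWc.eventually_lt continuousAt_const hlt',
        continuousAt_const.eventually_lt hWc hgt] with s hs hs'
      exact ramp_of_mem_Icc (mem_Icc.2 ⟨hs'.le, hs.le⟩)
    rw [rampDeriv, indicator_of_mem (mem_Ioo.2 ⟨hgt, hlt'⟩), inv_mul_eq_div]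
    exact ((hW.sub_const c).div_const (d - c)).congr_of_eventuallyEq hev
  · have hev : ∀ᶠ s in 𝓝 t, ramp c d (W s) = 1 := by
      filter_upwards [continuousAt_const.eventually_lt hWc hgt'] with s hs
      exact ramp_of_ge hcd hs.le
    rw [rampDeriv, indicator_of_notMem (fun h => hgt'.not_gt h.2), zero_mul]
    exact (hasDerivAt_const t 1).congr_of_eventuallyEq hev

theorem tendsto_ramp_nhdsGT_zero (y : ℝ) :
    Tendsto (fun δ => ramp δ (2 * δ) y) (𝓝[>] 0) (𝓝 ((Ioi 0).indicator 1 y)) := by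
  by_cases hy : 0 < y
  · rw [indicator_of_mem (mem_Ioi.2 hy)]
    refine tendsto_const_nhds.congr' ?_
    filter_upwards [Ioo_mem_nhdsGT (half_pos hy)] with δ hδ
    exact (ramp_of_ge (by linarith [hδ.1]) (by linarith [hδ.2])).symm
  · rw [indicator_of_notMem (mt mem_Ioi.1 hy)]
    refine tendsto_const_nhds.congr' ?_
    filter_upwards [self_mem_nhdsWithin] with δ hδ
    exact (ramp_of_le (by linarith [mem_Ioi.1 hδ])
      (by linarith [mem_Ioi.1 hδ, not_lt.1 hy])).symm

end Ramp

section Rho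

variable {p : ℝ}

theorem measurable_rho (p : ℝ) : Measurable (rho p) := by
  unfold rho; fun_prop

theorem rho_neg (p r : ℝ) : rho p (-r) = -rho p r := by
  simp [rho]

theorem abs_rho (hp : 1 < p) (r : ℝ) : |rho p r| = |r| ^ (p - 1) := by
  rw [rho, abs_mul, abs_of_nonneg (Real.rpow_nonneg (abs_nonneg r) _),
    ← Real.rpow_add_one' (abs_nonneg r) (by linarith)]
  ring_nf

theorem rho_of_nonneg (hp : 1 < p) {r : ℝ} (hr : 0 ≤ r) : rho p r = r ^ (p - 1) := by
  have h0 : 0 ≤ rho p r := mul_nonneg (Real.rpow_nonneg (abs_nonneg r) _) hr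
  rw [← abs_of_nonneg h0, abs_rho hp, abs_of_nonneg hr]

theorem rho_monotone (hp : 1 < p) : Monotone (rho p) :=
  monotone_of_odd_of_monotoneOn_nonneg (rho_neg p) fun a ha b hb hab => by
    rw [rho_of_nonneg hp ha, rho_of_nonneg hp hb]
    exact Real.rpow_le_rpow ha hab (by linarith)

theorem rho_sub_mul_sub_nonneg (hp : 1 < p) (a b : ℝ) : 0 ≤ (rho p a - rho p b) * (a - b) := by
  rcases le_total b a with h | h
  · exact mul_nonneg (sub_nonneg.2 (rho_monotone hp h)) (sub_nonneg.2 h)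
  · exact mul_nonneg_of_nonpos_of_nonpos (sub_nonpos.2 (rho_monotone hp h)) (sub_nonpos.2 h)

end Rho

theorem Real.rpow_sub_one_mul_le_rpow_add_rpow {p a b : ℝ} (hp : 1 ≤ p) (ha : 0 ≤ a)
    (hb : 0 ≤ b) : a ^ (p - 1) * b ≤ a ^ p + b ^ p := by
  set M := max a b
  have hM : 0 ≤ M := ha.trans (le_max_left a b)
  calc a ^ (p - 1) * b ≤ M ^ (p - 1) * M :=
        mul_le_mul (Real.rpow_le_rpow ha (le_max_left a b) (by linarith)) (le_max_right a b) hb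
          (Real.rpow_nonneg hM _)
    _ = M ^ p := by rw [← Real.rpow_add_one' hM (by linarith), sub_add_cancel]
    _ ≤ a ^ p + b ^ p := by
        rcases max_choice a b with h | h <;> rw [show M = _ from h]
        · linarith [Real.rpow_nonneg hb p]
        · linarith [Real.rpow_nonneg ha p]

theorem integrable_abs_rpow_iff_memLp {α : Type*} [MeasurableSpace α] {μ : Measure α}
    {f : α → ℝ} {p : ℝ} (hp : 0 < p) (hf : AEStronglyMeasurable f μ) :
    Integrable (fun x => |f x| ^ p) μ ↔ MemLp f (ENNReal.ofReal p) μ := by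
  have h := integrable_norm_rpow_iff hf (by simpa using hp) ENNReal.ofReal_ne_top
  rwa [ENNReal.toReal_ofReal hp.le] at h

namespace IntervalSobolev

variable {ℓ p : ℝ} {u u' : ℝ → ℝ}

theorem integrableOn_Icc (hu : IntervalSobolev ℓ p u u') : IntegrableOn u' (Icc 0 ℓ) := by
  rw [integrableOn_Icc_iff_integrableOn_Ioo]
  exact hu.1

theorem intervalIntegrable (hu : IntervalSobolev ℓ p u u') {x : ℝ} (hx : x ∈ Icc 0 ℓ) :
    IntervalIntegrable u' volume 0 x :=
  (hu.integrableOn_Icc.mono_set (by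
    rw [uIcc_of_le hx.1]; exact Icc_subset_Icc_right hx.2)).intervalIntegrable

theorem continuousOn_s5 (hu : IntervalSobolev ℓ p u u') : ContinuousOn u (Icc 0 ℓ) := by
  rcases lt_or_ge ℓ 0 with hℓ | hℓ
  · simp [Icc_eq_empty_of_lt hℓ]
  have hprim := continuousOn_primitive_interval (uIcc_of_le hℓ ▸ hu.integrableOn_Icc)
  rw [uIcc_of_le hℓ] at hprim
  exact (continuousOn_const.add hprim).congr hu.2.2

theorem integrableOn_mul (hu : IntervalSobolev ℓ p u u') {f : ℝ → ℝ}
    (hf : IntegrableOn f (Ioo 0 ℓ)) : IntegrableOn (fun x => f x * u x) (Ioo 0 ℓ) :=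
  ((by rwa [integrableOn_Icc_iff_integrableOn_Ioo] : IntegrableOn f (Icc 0 ℓ)).mul_continuousOn
    hu.continuousOn_s5 isCompact_Icc).mono_set Ioo_subset_Icc_self

theorem integrableOn_rho_mul (hp : 1 < p) (hu : IntervalSobolev ℓ p u u') {φ φ' : ℝ → ℝ}
    (hφ : IntervalSobolev ℓ p φ φ') : IntegrableOn (fun x => rho p (u' x) * φ' x) (Ioo 0 ℓ) := by
  refine (hu.2.1.add hφ.2.1).mono' ?_ (Eventually.of_forall fun x => ?_)
  · exact ((measurable_rho p).comp_aemeasurable hu.1.aemeasurable).aestronglyMeasurable.mul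
      hφ.1.aestronglyMeasurable
  · rw [Real.norm_eq_abs, abs_mul, abs_rho hp]
    exact Real.rpow_sub_one_mul_le_rpow_add_rpow hp.le (abs_nonneg _) (abs_nonneg _)

theorem sub (hp : 0 < p) {v v' : ℝ → ℝ} (hu : IntervalSobolev ℓ p u u')
    (hv : IntervalSobolev ℓ p v v') : IntervalSobolev ℓ p (u - v) (u' - v') := by
  have memLp {w w'} (hw : IntervalSobolev ℓ p w w') :=
    (integrable_abs_rpow_iff_memLp hp hw.1.aestronglyMeasurable).1 hw.2.1
  refine ⟨hu.1.sub hv.1,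
    (integrable_abs_rpow_iff_memLp hp (hu.1.sub hv.1).aestronglyMeasurable).2
      ((memLp hu).sub (memLp hv)), fun x hx => ?_⟩
  simp only [Pi.sub_apply]
  rw [hu.2.2 x hx, hv.2.2 x hx,
    integral_sub (hu.intervalIntegrable hx) (hv.intervalIntegrable hx)]
  ring

theorem ramp_comp_eq {c d : ℝ} (hcd : c < d) (hu : IntervalSobolev ℓ p u u') {x : ℝ}
    (hx : x ∈ Icc 0 ℓ) :
    ramp c d (u x) = ramp c d (u 0) + ∫ t in 0..x, rampDeriv c d (u t) * u' t := by
  set W : ℝ → ℝ := fun t => u 0 + ∫ s in 0..t, u' s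
  have hWu : EqOn W u (uIcc 0 x) := by
    rw [uIcc_of_le hx.1]
    exact fun t ht => (hu.2.2 t ⟨ht.1, ht.2.trans hx.2⟩).symm
  have hI := hu.intervalIntegrable hx
  have hWac : AbsolutelyContinuousOnInterval W 0 x :=
    (LipschitzWith.const (u 0)).lipschitzOnWith.absolutelyContinuousOnInterval.add
      (hI.absolutelyContinuousOnInterval_intervalIntegral left_mem_uIcc)
  -- the derivative of `W` vanishes a.e. on the level sets `c` and `d`, where `ramp` has a corner
  have hderiv : ∀ᵐ t, t ∈ uIcc 0 x →
      HasDerivAt (ramp c d ∘ W) (rampDeriv c d (W t) * u' t) t := by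
    filter_upwards [hI.ae_hasDerivAt_integral,
      ae_eq_zero_of_hasDerivAt_of_eq (W := W) (h := u') c,
      ae_eq_zero_of_hasDerivAt_of_eq (W := W) (h := u') d] with t ht hc hd hmem
    have hWt : HasDerivAt W (u' t) t := (ht hmem 0 left_mem_uIcc).const_add (u 0)
    exact hWt.ramp_comp hcd (hc hWt) (hd hWt)
  have hFTC := ((lipschitzWith_ramp hcd).comp_absolutelyContinuousOnInterval
    hWac).integral_eq_sub_of_ae_hasDerivAt hderiv
  rw [integral_congr fun t ht => by rw [hWu ht]] at hFTC
  simp only [Function.comp_apply, hWu left_mem_uIcc, hWu right_mem_uIcc] at hFTC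
  linarith

theorem ramp_comp {c d : ℝ} (hp : 0 ≤ p) (hcd : c < d) (hu : IntervalSobolev ℓ p u u') :
    IntervalSobolev ℓ p (fun x => ramp c d (u x)) (fun x => rampDeriv c d (u x) * u' x) := by
  have hbound (y : ℝ) : |rampDeriv c d y| ≤ (d - c)⁻¹ := by
    by_cases hy : y ∈ Ioo c d
    · rw [rampDeriv, indicator_of_mem hy, abs_of_pos (inv_pos.2 (sub_pos.2 hcd))]
    · rw [rampDeriv, indicator_of_notMem hy, abs_zero]
      exact (inv_pos.2 (sub_pos.2 hcd)).le
  have hmeas :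
      AEStronglyMeasurable (fun x => rampDeriv c d (u x)) (volume.restrict (Ioo 0 ℓ)) :=
    ((measurable_const.indicator measurableSet_Ioo).comp_aemeasurable
      ((hu.continuousOn_s5.mono Ioo_subset_Icc_self).aestronglyMeasurable
        measurableSet_Ioo).aemeasurable).aestronglyMeasurable
  have hint : IntegrableOn (fun x => rampDeriv c d (u x) * u' x) (Ioo 0 ℓ) :=
    hu.1.bdd_mul hmeas (Eventually.of_forall fun x => hbound _)
  refine ⟨hint,
    (hu.2.1.const_mul ((d - c)⁻¹ ^ p)).mono' ?_ (Eventually.of_forall fun x => ?_),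
    fun x hx => hu.ramp_comp_eq hcd hx⟩
  · exact (continuous_abs.rpow_const fun _ => Or.inr hp).comp_aestronglyMeasurable
      hint.aestronglyMeasurable
  · rw [Real.norm_eq_abs, abs_of_nonneg (Real.rpow_nonneg (abs_nonneg _) _), abs_mul,
      Real.mul_rpow (abs_nonneg _) (abs_nonneg _)]
    exact mul_le_mul_of_nonneg_right (Real.rpow_le_rpow (abs_nonneg _) (hbound _) hp)
      (Real.rpow_nonneg (abs_nonneg _) _)

end IntervalSobolev

theorem mul_le_max_zero {a t : ℝ} (ht₀ : 0 ≤ t) (ht₁ : t ≤ 1) : a * t ≤ max a 0 := by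
  rcases le_total 0 a with ha | ha
  · exact (mul_le_of_le_one_right ha ht₁).trans (le_max_left _ _)
  · exact (mul_nonpos_of_nonpos_of_nonneg ha ht₀).trans (le_max_right _ _)

theorem Monotone.sub_mul_indicator_Ioi_eq_max {γ : ℝ → ℝ} (hγ : Monotone γ) (a b : ℝ) :
    (γ a - γ b) * (Ioi 0).indicator 1 (a - b) = max (γ a - γ b) 0 := by
  by_cases h : a - b ∈ Ioi 0
  · rw [indicator_of_mem h, Pi.one_apply, mul_one,
      max_eq_left (sub_nonneg.2 (hγ (by linarith [mem_Ioi.1 h])))]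
  · rw [indicator_of_notMem h, mul_zero,
      max_eq_right (sub_nonpos.2 (hγ (by linarith [not_lt.1 (mt mem_Ioi.2 h)])))]

namespace GraphSobolev

variable {G : MetricGraph} {p : G.E → ℝ} {u u' : G.E → ℝ → ℝ} {uV : G.V → ℝ}

theorem sub (hp : ∀ e, 0 < p e) {v v' : G.E → ℝ → ℝ} {vV : G.V → ℝ}
    (hu : GraphSobolev G p u u' uV) (hv : GraphSobolev G p v v' vV) :
    GraphSobolev G p (u - v) (u' - v') (uV - vV) :=
  ⟨fun e => (hu.1 e).sub (hp e) (hv.1 e), fun e => by simp [hu.2.1 e, hv.2.1 e],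
    fun e => by simp [hu.2.2 e, hv.2.2 e]⟩

theorem ramp_comp {c d : ℝ} (hp : ∀ e, 0 ≤ p e) (hcd : c < d)
    (hu : GraphSobolev G p u u' uV) :
    GraphSobolev G p (fun e x => ramp c d (u e x)) (fun e x => rampDeriv c d (u e x) * u' e x)
      (fun w => ramp c d (uV w)) :=
  ⟨fun e => (hu.1 e).ramp_comp (hp e) hcd, fun e => congrArg (ramp c d) (hu.2.1 e),
    fun e => congrArg (ramp c d) (hu.2.2 e)⟩

end GraphSobolev

theorem ae_le_of_edgeSum_integral_posPart_sub_nonpos {G : MetricGraph} {w₁ w₂ : G.E → ℝ → ℝ}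
    (hw : ∀ e, IntegrableOn (fun x => w₁ e x - w₂ e x) (Ioo 0 (G.len e)))
    (h : edgeSum G (fun e => ∫ x in Ioo (0:ℝ) (G.len e), max (w₁ e x - w₂ e x) 0) ≤ 0)
    (e : G.E) :
    w₁ e ≤ᵐ[volume.restrict (Ioo 0 (G.len e))] w₂ e := by
  let _ : Fintype G.E := G.fintypeE
  have hnn : ∀ e ∈ Finset.univ, 0 ≤ ∫ x in Ioo (0:ℝ) (G.len e), max (w₁ e x - w₂ e x) 0 :=
    fun e _ => integral_nonneg fun x => le_max_right _ _
  have hzero := (Finset.sum_eq_zero_iff_of_nonneg hnn).1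
    (le_antisymm h (Finset.sum_nonneg hnn)) e (Finset.mem_univ e)
  filter_upwards [(integral_eq_zero_iff_of_nonneg (fun x => le_max_right _ _)
    (hw e).pos_part).1 hzero] with x hx
  exact sub_nonpos.1 (max_eq_right_iff.1 hx)

namespace SolvesGraphProblem

variable {G : MetricGraph} {p : G.E → ℝ} {γ : G.E → ℝ → ℝ} {f₁ f₂ : G.E → ℝ → ℝ}
  {ω₁ ω₂ : G.V → ℝ} {v₁ v₂ u₁ u₂ u₁' u₂' : G.E → ℝ → ℝ} {uV₁ uV₂ : G.V → ℝ}

theorem weak_formulation_sub (hp : ∀ e, 1 < p e)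
    (hf₁ : ∀ e, IntegrableOn (f₁ e) (Ioo 0 (G.len e)))
    (hf₂ : ∀ e, IntegrableOn (f₂ e) (Ioo 0 (G.len e)))
    (h₁ : SolvesGraphProblem G p γ f₁ ω₁ v₁ u₁ u₁' uV₁)
    (h₂ : SolvesGraphProblem G p γ f₂ ω₂ v₂ u₂ u₂' uV₂)
    {φ φ' : G.E → ℝ → ℝ} {φV : G.V → ℝ} (hφ : GraphSobolev G p φ φ' φV) :
    edgeSum G (fun e => ∫ x in Ioo 0 (G.len e), (v₁ e x - v₂ e x) * φ e x)
      + edgeSum G (fun e => ∫ x in Ioo 0 (G.len e),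
          (rho (p e) (u₁' e x) - rho (p e) (u₂' e x)) * φ' e x)
    = edgeSum G (fun e => ∫ x in Ioo 0 (G.len e), (f₁ e x - f₂ e x) * φ e x)
      + vertexSum G (fun w => (ω₁ w - ω₂ w) * φV w) := by
  have hsplit {a b ψ : G.E → ℝ → ℝ}
      (ha : ∀ e, IntegrableOn (fun x => a e x * ψ e x) (Ioo 0 (G.len e)))
      (hb : ∀ e, IntegrableOn (fun x => b e x * ψ e x) (Ioo 0 (G.len e))) :
      edgeSum G (fun e => ∫ x in Ioo 0 (G.len e), (a e x - b e x) * ψ e x)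
        = edgeSum G (fun e => ∫ x in Ioo 0 (G.len e), a e x * ψ e x)
          - edgeSum G (fun e => ∫ x in Ioo 0 (G.len e), b e x * ψ e x) := by
    simp only [edgeSum, sub_mul, ← Finset.sum_sub_distrib, integral_sub (ha _) (hb _)]
  rw [hsplit (fun e => (hφ.1 e).integrableOn_mul (h₁.1 e))
      (fun e => (hφ.1 e).integrableOn_mul (h₂.1 e)),
    hsplit (fun e => (h₁.2.1.1 e).integrableOn_rho_mul (hp e) (hφ.1 e))
      (fun e => (h₂.2.1.1 e).integrableOn_rho_mul (hp e) (hφ.1 e)),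
    hsplit (fun e => (hφ.1 e).integrableOn_mul (hf₁ e))
      (fun e => (hφ.1 e).integrableOn_mul (hf₂ e))]
  have E₁ := h₁.2.2.2 φ φ' φV hφ
  have E₂ := h₂.2.2.2 φ φ' φV hφ
  simp only [vertexSum, sub_mul, Finset.sum_sub_distrib] at E₁ E₂ ⊢
  linarith

theorem edgeSum_integral_sub_mul_ramp_le (hp : ∀ e, 1 < p e)
    (hf₁ : ∀ e, IntegrableOn (f₁ e) (Ioo 0 (G.len e)))
    (hf₂ : ∀ e, IntegrableOn (f₂ e) (Ioo 0 (G.len e)))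
    (h₁ : SolvesGraphProblem G p γ f₁ ω₁ v₁ u₁ u₁' uV₁)
    (h₂ : SolvesGraphProblem G p γ f₂ ω₂ v₂ u₂ u₂' uV₂) {c d : ℝ} (hcd : c < d) :
    edgeSum G (fun e => ∫ x in Ioo 0 (G.len e), (v₁ e x - v₂ e x) * ramp c d (u₁ e x - u₂ e x))
      ≤ edgeSum G (fun e => ∫ x in Ioo (0:ℝ) (G.len e), max (f₁ e x - f₂ e x) 0)
        + vertexSum G (fun w => max (ω₁ w - ω₂ w) 0) := by
  have hφ := (h₁.2.1.sub (fun e => by linarith [hp e]) h₂.2.1).ramp_comp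
    (fun e => by linarith [hp e]) hcd
  have hweak := h₁.weak_formulation_sub hp hf₁ hf₂ h₂ hφ
  simp only [Pi.sub_apply] at hweak
  have hgrad : 0 ≤ edgeSum G (fun e => ∫ x in Ioo 0 (G.len e),
      (rho (p e) (u₁' e x) - rho (p e) (u₂' e x))
        * (rampDeriv c d (u₁ e x - u₂ e x) * (u₁' e x - u₂' e x))) := by
    refine Finset.sum_nonneg fun e _ => integral_nonneg fun x => ?_
    have hramp : 0 ≤ rampDeriv c d (u₁ e x - u₂ e x) :=
      indicator_nonneg (fun _ _ => (inv_pos.2 (sub_pos.2 hcd)).le) _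
    rw [mul_left_comm]
    exact mul_nonneg hramp (rho_sub_mul_sub_nonneg (hp e) _ _)
  have hf : edgeSum G (fun e => ∫ x in Ioo 0 (G.len e),
      (f₁ e x - f₂ e x) * ramp c d (u₁ e x - u₂ e x))
      ≤ edgeSum G (fun e => ∫ x in Ioo (0:ℝ) (G.len e), max (f₁ e x - f₂ e x) 0) :=
    Finset.sum_le_sum fun e _ =>
      integral_mono ((hφ.1 e).integrableOn_mul ((hf₁ e).sub (hf₂ e)))
        ((hf₁ e).sub (hf₂ e)).pos_part fun x =>
          mul_le_max_zero (ramp_nonneg hcd.le _) (ramp_le_one hcd.le _)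
  have hω : vertexSum G (fun w => (ω₁ w - ω₂ w) * ramp c d (uV₁ w - uV₂ w))
      ≤ vertexSum G (fun w => max (ω₁ w - ω₂ w) 0) :=
    Finset.sum_le_sum fun w _ => mul_le_max_zero (ramp_nonneg hcd.le _) (ramp_le_one hcd.le _)
  linarith

theorem edgeSum_integral_posPart_sub_le (hp : ∀ e, 1 < p e) (hγ : ∀ e, Monotone (γ e))
    (hf₁ : ∀ e, IntegrableOn (f₁ e) (Ioo 0 (G.len e)))
    (hf₂ : ∀ e, IntegrableOn (f₂ e) (Ioo 0 (G.len e)))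
    (h₁ : SolvesGraphProblem G p γ f₁ ω₁ v₁ u₁ u₁' uV₁)
    (h₂ : SolvesGraphProblem G p γ f₂ ω₂ v₂ u₂ u₂' uV₂) :
    edgeSum G (fun e => ∫ x in Ioo (0:ℝ) (G.len e), max (v₁ e x - v₂ e x) 0)
      ≤ edgeSum G (fun e => ∫ x in Ioo (0:ℝ) (G.len e), max (f₁ e x - f₂ e x) 0)
        + vertexSum G (fun w => max (ω₁ w - ω₂ w) 0) := by
  refine le_of_tendsto (x := 𝓝[>] 0) (f := fun δ => edgeSum G fun e =>
      ∫ x in Ioo 0 (G.len e), (v₁ e x - v₂ e x) * ramp δ (2 * δ) (u₁ e x - u₂ e x)) ?_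
    (eventually_mem_nhdsWithin.mono fun δ (hδ : 0 < δ) =>
      h₁.edgeSum_integral_sub_mul_ramp_le hp hf₁ hf₂ h₂ (by linarith))
  refine tendsto_finsetSum _ fun e _ => tendsto_integral_filter_of_dominated_convergence
    (fun x => |v₁ e x - v₂ e x|) ?_ ?_ ((h₁.1 e).sub (h₂.1 e)).abs ?_
  · have hu :
        AEStronglyMeasurable (fun x => u₁ e x - u₂ e x) (volume.restrict (Ioo 0 (G.len e))) :=
      (((h₁.2.1.1 e).continuousOn_s5.sub (h₂.2.1.1 e).continuousOn_s5).mono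
        Ioo_subset_Icc_self).aestronglyMeasurable measurableSet_Ioo
    filter_upwards [self_mem_nhdsWithin] with δ (hδ : 0 < δ)
    exact ((h₁.1 e).sub (h₂.1 e)).aestronglyMeasurable.mul
      ((lipschitzWith_ramp (by linarith : δ < 2 * δ)).continuous.comp_aestronglyMeasurable hu)
  · filter_upwards [self_mem_nhdsWithin] with δ (hδ : 0 < δ)
    refine Eventually.of_forall fun x => ?_
    rw [Real.norm_eq_abs, abs_mul, abs_of_nonneg (ramp_nonneg (by linarith) _)]
    exact mul_le_of_le_one_right (abs_nonneg _) (ramp_le_one (by linarith) _)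
  · filter_upwards [h₁.2.2.1 e, h₂.2.2.1 e] with x hx₁ hx₂
    rw [hx₁, hx₂, ← (hγ e).sub_mul_indicator_Ioi_eq_max]
    exact (tendsto_ramp_nhdsGT_zero _).const_mul _

theorem ae_le_of_same_data (hp : ∀ e, 1 < p e) (hγ : ∀ e, Monotone (γ e))
    (hf₁ : ∀ e, IntegrableOn (f₁ e) (Ioo 0 (G.len e)))
    (h₁ : SolvesGraphProblem G p γ f₁ ω₁ v₁ u₁ u₁' uV₁)
    (h₂ : SolvesGraphProblem G p γ f₁ ω₁ v₂ u₂ u₂' uV₂) (e : G.E) :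
    v₁ e ≤ᵐ[volume.restrict (Ioo 0 (G.len e))] v₂ e := by
  refine ae_le_of_edgeSum_integral_posPart_sub_nonpos (fun e => (h₁.1 e).sub (h₂.1 e)) ?_ e
  simpa [edgeSum, vertexSum] using h₁.edgeSum_integral_posPart_sub_le hp hγ hf₁ hf₁ h₂

end SolvesGraphProblem

/-- contraction/comparison principle for weak solutions of (P_ω^f) on a
metric graph; in particular uniqueness of weak solutions. -/
theorem graph_comparison_principle
    (G : MetricGraph) (p : G.E → ℝ) (hp : ∀ e, 1 < p e)
    (γ : G.E → ℝ → ℝ)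
    (hγ : ∀ e, Continuous (γ e) ∧ StrictMono (γ e) ∧ Function.Surjective (γ e) ∧ γ e 0 = 0)
    (f₁ f₂ : G.E → ℝ → ℝ)
    (hf₁ : ∀ e, IntegrableOn (f₁ e) (Ioo 0 (G.len e)) volume)
    (hf₂ : ∀ e, IntegrableOn (f₂ e) (Ioo 0 (G.len e)) volume)
    (ω₁ ω₂ : G.V → ℝ) (v₁ v₂ : G.E → ℝ → ℝ)
    (h₁ : IsGraphWeakSolution G p γ f₁ ω₁ v₁)
    (h₂ : IsGraphWeakSolution G p γ f₂ ω₂ v₂) :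
    edgeSum G (fun e => ∫ x in Ioo (0:ℝ) (G.len e), max (v₁ e x - v₂ e x) 0)
      ≤ edgeSum G (fun e => ∫ x in Ioo (0:ℝ) (G.len e), max (f₁ e x - f₂ e x) 0)
        + vertexSum G (fun w => max (ω₁ w - ω₂ w) 0) ∧
    (f₁ = f₂ → ω₁ = ω₂ →
      ∀ e, v₁ e =ᵐ[volume.restrict (Ioo 0 (G.len e))] v₂ e) := by
  obtain ⟨u₁, u₁', uV₁, h₁⟩ := h₁
  obtain ⟨u₂, u₂', uV₂, h₂⟩ := h₂
  have hγ' : ∀ e, Monotone (γ e) := fun e => (hγ e).2.1.monotone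
  refine ⟨h₁.edgeSum_integral_posPart_sub_le hp hγ' hf₁ hf₂ h₂, fun hf hω e => ?_⟩
  subst hf hω
  exact (h₁.ae_le_of_same_data hp hγ' hf₁ h₂ e).antisymm (h₂.ae_le_of_same_data hp hγ' hf₁ h₁ e)
end
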